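/- arXiv:0910.1866 — 7 statements merged into one kernel-verified Lean document; each statement's English description precedes it below -/
import Mathlib

section
/- (Uniqueness from leading monomials when all orders are less than 2.) Let (u₁,…,u_p) and (u′₁,…,u′_p) be two solutions of the escape-region equations such that for each 1 ≤ j < p, u_j and u′_j are nonzero with the same leading term m_j, and ord(m_j) < 2μ. Then u_j = u′_j for all j. -/
/-- `f` has leading term (leading monomial) `β·X^q`: the coefficient of `X^q` is `β ≠ 0`
and all lower coefficients vanish. -/
def HasLeadingTerm (f : PowerSeries ℂ) (β : ℂ) (q : ℕ) : Prop :=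
  β ≠ 0 ∧ PowerSeries.coeff q f = β ∧ ∀ n < q, PowerSeries.coeff n f = 0

/-- `(u 1, …, u p)` is a solution of the escape-region equations of period `p`
(where `X` plays the role of `𝔱^{1/μ}`, i.e. of `ξ^{1/μ}` with `ξ = 1/(3a)`):
`u p = 0` and `X^{2μ}(u_{j+1} − u₁) = u_j²(u_j − 1)` for `1 ≤ j < p`. -/
def IsEscapeSolution (p μ : ℕ) (u : ℕ → PowerSeries ℂ) : Prop :=
  u p = 0 ∧ ∀ j, 1 ≤ j → j < p →
    (PowerSeries.X : PowerSeries ℂ) ^ (2 * μ) * (u (j + 1) - u 1)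
      = (u j) ^ 2 * (u j - 1)

/-- The error `E_j(w) = X^{2μ}(w_{j+1} − w₁) − w_j²(w_j − 1)`. -/
noncomputable def Err (μ : ℕ) (w : ℕ → PowerSeries ℂ) (j : ℕ) : PowerSeries ℂ :=
  (PowerSeries.X : PowerSeries ℂ) ^ (2 * μ) * (w (j + 1) - w 1) - (w j) ^ 2 * (w j - 1)

/-!
The differences `d_j = u_j - u'_j` satisfy `X^{2μ}(d_{j+1} - d_1) = d_j H_j`, where
`H_j = u_j² + u_j u'_j + u'_j² - (u_j + u'_j)` is the secant (difference quotient) of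
`t ↦ t²(t - 1)`.
Since `u_j` and `u'_j` share the leading term `β_j X^{q_j}`, the series `H_j` is `X^{q_j}`
times a unit: its coefficient at `X^{q_j}` is `(3σ_j - 2)β_j`, where the constant term `σ_j`
of `u_j` lies in `{0, 1}`.
If all `d_k` are divisible by `X^n`, the relation makes `X^{q_j} d_j` divisible by
`X^{2μ + n}`, and `q_j < 2μ` upgrades this to `X^{n+1} ∣ d_j`. Hence every `d_j` vanishes.
-/

open PowerSeries

theorem HasLeadingTerm.exists_eq_X_pow_mul {f : ℂ⟦X⟧} {β : ℂ} {q : ℕ}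
    (h : HasLeadingTerm f β q) : ∃ a, f = X ^ q * a ∧ constantCoeff a = β := by
  obtain ⟨a, rfl⟩ := X_pow_dvd_iff.mpr h.2.2
  refine ⟨a, rfl, ?_⟩
  simpa [coeff_X_pow_mul'] using h.2.1

theorem HasLeadingTerm.exists_secant_eq_X_pow_mul_unit {u u' : ℂ⟦X⟧} {β : ℂ} {q : ℕ}
    (h : HasLeadingTerm u β q) (h' : HasLeadingTerm u' β q)
    (hσ : 3 * constantCoeff u ≠ 2) :
    ∃ c, IsUnit c ∧ u ^ 2 + u * u' + u' ^ 2 - (u + u') = X ^ q * c := by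
  obtain ⟨a, rfl, ha⟩ := h.exists_eq_X_pow_mul
  obtain ⟨a', rfl, ha'⟩ := h'.exists_eq_X_pow_mul
  refine ⟨X ^ q * (a ^ 2 + a * a' + a' ^ 2) - (a + a'), ?_, by ring⟩
  rw [isUnit_iff_constantCoeff, isUnit_iff_ne_zero]
  have hc : constantCoeff (X ^ q * (a ^ 2 + a * a' + a' ^ 2) - (a + a')) =
      (3 * constantCoeff (X ^ q * a) - 2) * β := by
    simp only [map_sub, map_add, map_mul, map_pow, ha, ha']
    ring
  exact hc ▸ mul_ne_zero (sub_ne_zero.mpr hσ) h.1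

theorem IsEscapeSolution.constantCoeff_eq_zero_or_eq_one {p μ : ℕ} {u : ℕ → ℂ⟦X⟧}
    (hμ : 1 ≤ μ) (hu : IsEscapeSolution p μ u) {j : ℕ} (hj1 : 1 ≤ j) (hjp : j < p) :
    constantCoeff (u j) = 0 ∨ constantCoeff (u j) = 1 := by
  have h := congrArg constantCoeff (hu.2 j hj1 hjp)
  simp only [map_mul, map_pow, map_sub, constantCoeff_X, map_one,
    zero_pow (by omega : 2 * μ ≠ 0), zero_mul] at h
  rcases mul_eq_zero.mp h.symm with h | h
  · exact .inl (pow_eq_zero_iff two_ne_zero |>.mp h)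
  · exact .inr (sub_eq_zero.mp h)

theorem IsEscapeSolution.X_pow_mul_sub_eq {p μ : ℕ} {u u' : ℕ → ℂ⟦X⟧}
    (hu : IsEscapeSolution p μ u) (hu' : IsEscapeSolution p μ u') {j : ℕ}
    (hj1 : 1 ≤ j) (hjp : j < p) :
    X ^ (2 * μ) * ((u (j + 1) - u' (j + 1)) - (u 1 - u' 1)) =
      (u j ^ 2 + u j * u' j + u' j ^ 2 - (u j + u' j)) * (u j - u' j) := by
  linear_combination hu.2 j hj1 hjp - hu'.2 j hj1 hjp

section Descent

variable {R : Type*} [CommRing R] [IsDomain R]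

theorem eq_zero_of_X_pow_mul_sub_eq {p N : ℕ} {d : ℕ → R⟦X⟧} {s : ℕ → ℕ}
    (hdp : d p = 0) (hs : ∀ j, 1 ≤ j → j < p → s j < N)
    (h : ∀ j, 1 ≤ j → j < p →
      ∃ c, IsUnit c ∧ X ^ N * (d (j + 1) - d 1) = X ^ s j * c * d j) :
    ∀ j, 1 ≤ j → j ≤ p → d j = 0 := by
  have hdvd : ∀ n j, 1 ≤ j → j ≤ p → (X : R⟦X⟧) ^ n ∣ d j := by
    intro n
    induction n with
    | zero => simp
    | succ n ih =>
      intro j hj1 hjp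
      rcases hjp.lt_or_eq with hjp | rfl
      · obtain ⟨c, hc, hrel⟩ := h j hj1 hjp
        have hN : (X : R⟦X⟧) ^ (N + n) ∣ X ^ N * (d (j + 1) - d 1) := by
          rw [pow_add]
          exact mul_dvd_mul_left _ (dvd_sub (ih (j + 1) (by omega) hjp) (ih 1 le_rfl (by omega)))
        have hle : s j + (n + 1) ≤ N + n := by have := hs j hj1 hjp; omega
        replace hN := (pow_dvd_pow X hle).trans hN
        rwa [hrel, pow_add, mul_assoc, mul_dvd_mul_iff_left (pow_ne_zero _ X_ne_zero),
          hc.dvd_mul_left] at hN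
      · simp [hdp]
  intro j hj1 hjp
  ext m
  exact X_pow_dvd_iff.mp (hdvd (m + 1) j hj1 hjp) m m.lt_succ_self

end Descent

theorem uniqueness_small_order_general (p μ : ℕ) (hμ : 1 ≤ μ)
    (u u' : ℕ → PowerSeries ℂ)
    (hu : IsEscapeSolution p μ u) (hu' : IsEscapeSolution p μ u')
    (β : ℕ → ℂ) (q : ℕ → ℕ)
    (hlead : ∀ j, 1 ≤ j → j < p → HasLeadingTerm (u j) (β j) (q j))
    (hlead' : ∀ j, 1 ≤ j → j < p → HasLeadingTerm (u' j) (β j) (q j))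
    (hq : ∀ j, 1 ≤ j → j < p → q j < 2 * μ) :
    ∀ j, 1 ≤ j → j ≤ p → u j = u' j := by
  have hdiff := eq_zero_of_X_pow_mul_sub_eq (d := fun k => u k - u' k) (by simp [hu.1, hu'.1]) hq
    fun j hj1 hjp => by
      have hσ : 3 * constantCoeff (u j) ≠ 2 := by
        rcases hu.constantCoeff_eq_zero_or_eq_one hμ hj1 hjp with h | h <;> rw [h] <;> norm_num
      obtain ⟨c, hc, hH⟩ :=
        (hlead j hj1 hjp).exists_secant_eq_X_pow_mul_unit (hlead' j hj1 hjp) hσ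
      exact ⟨c, hc, by rw [hu.X_pow_mul_sub_eq hu' hj1 hjp, hH]⟩
  exact fun j hj1 hjp => sub_eq_zero.mp (hdiff j hj1 hjp)

/-- **Uniqueness from leading monomials when all orders are less than 2.**
If two solutions of the escape-region equations have, for each `1 ≤ j < p`, nonzero
entries with the same leading term `m_j = β_j·X^{q_j}` of order `q_j < 2μ`,
then the solutions coincide. -/
theorem uniqueness_small_order (p μ : ℕ) (hp : 1 ≤ p) (hμ : 1 ≤ μ)
    (u u' : ℕ → PowerSeries ℂ)
    (hu : IsEscapeSolution p μ u) (hu' : IsEscapeSolution p μ u')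
    (β : ℕ → ℂ) (q : ℕ → ℕ)
    (hlead : ∀ j, 1 ≤ j → j < p → HasLeadingTerm (u j) (β j) (q j))
    (hlead' : ∀ j, 1 ≤ j → j < p → HasLeadingTerm (u' j) (β j) (q j))
    (hq : ∀ j, 1 ≤ j → j < p → q j < 2 * μ) :
    ∀ j, 1 ≤ j → j ≤ p → u j = u' j :=
  uniqueness_small_order_general p μ hμ u u' hu hu' β q hlead hlead' hq
end

section
/- (Existence from an approximate solution.) Let m_j = β_j·X^{q_j} (with β_j ∈ ℂ, β_j ≠ 0), for 1 ≤ j < p, be monomials such that for each j either m_j = 1 or q_j ≥ μ, and q_j < 2μ for all j. Suppose there exists a tuple (w₁,…,w_p) in ℂ[[X]] with w_p = 0 such that each w_j has leading term m_j, and such that ord(E_j(w)) ≥ Q for all 1 ≤ j < p, for some integer Q > 2·max_j q_j. Then there exists a (necessarily unique) solution (u₁,…,u_p) of the escape-region equations such that, for each 1 ≤ j < p, u_j has leading term m_j. -/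
/-!
Perturbing `w` by `δ` changes `E_j` by `X^{2μ}(δ_{j+1} − δ₁) − (3w_j² − 2w_j)δ_j` plus terms
quadratic in `δ_j`. The factor `3w_j² − 2w_j` has leading term `m_j*`; the shifted terms gain
order `2μ > q_j`, and the quadratic terms are negligible as soon as the error has order `> 2q_j`.
So the system is triangular in the coefficients: coefficient `N` of `E_j` sees coefficient
`N − q_j` of `δ_j` only through multiplication by the nonzero coefficient of `m_j*`. Killing the
error one coefficient at a time (a Newton step) converges `X`-adically to a solution, and the
same triangularity forces two solutions with the same leading terms to agree to every order.
-/

open PowerSeries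

namespace PowerSeries

variable {R : Type*} [CommRing R]

theorem eq_zero_of_forall_X_pow_dvd {f : R⟦X⟧} (h : ∀ n, (X : R⟦X⟧) ^ n ∣ f) : f = 0 :=
  ext fun n => by simpa using X_pow_dvd_iff.mp (h (n + 1)) n n.lt_succ_self

theorem X_pow_dvd_sub_of_forall_X_pow_dvd_succ_sub {f : ℕ → R⟦X⟧}
    (hf : ∀ k, (X : R⟦X⟧) ^ (k + 1) ∣ f (k + 1) - f k) {k m : ℕ} (hkm : k ≤ m) :
    (X : R⟦X⟧) ^ (k + 1) ∣ f m - f k := by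
  induction hkm with
  | refl => simp
  | @step m hkm ih =>
    rw [← sub_add_sub_cancel _ (f m)]
    exact dvd_add ((pow_dvd_pow X (Nat.succ_le_succ hkm)).trans (hf m)) ih

theorem exists_forall_X_pow_dvd_sub {f : ℕ → R⟦X⟧}
    (hf : ∀ k, (X : R⟦X⟧) ^ (k + 1) ∣ f (k + 1) - f k) :
    ∃ L, ∀ k, (X : R⟦X⟧) ^ (k + 1) ∣ L - f k := by
  refine ⟨mk fun n => coeff n (f n), fun k => X_pow_dvd_iff.mpr fun n hn => ?_⟩
  have h := X_pow_dvd_iff.mp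
    (X_pow_dvd_sub_of_forall_X_pow_dvd_succ_sub hf (Nat.le_of_lt_succ hn)) n n.lt_succ_self
  rw [map_sub, sub_eq_zero] at h
  rw [map_sub, coeff_mk, h, sub_self]

end PowerSeries

theorem hasLeadingTerm_X_pow_mul {g : ℂ⟦X⟧} {β : ℂ} {q : ℕ} (hβ : β ≠ 0)
    (hg : constantCoeff g = β) : HasLeadingTerm (X ^ q * g) β q :=
  ⟨hβ, by simp [coeff_X_pow_mul', hg], fun n hn => by simp [coeff_X_pow_mul', hn.not_ge]⟩

namespace HasLeadingTerm

variable {f g : ℂ⟦X⟧} {β : ℂ} {q : ℕ}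

theorem X_pow_dvd (hf : HasLeadingTerm f β q) : X ^ q ∣ f :=
  X_pow_dvd_iff.mpr hf.2.2

theorem exists_eq_X_pow_mul_s4 (hf : HasLeadingTerm f β q) :
    ∃ g, f = X ^ q * g ∧ constantCoeff g = β := by
  obtain ⟨g, rfl⟩ := hf.X_pow_dvd
  refine ⟨g, rfl, ?_⟩
  simpa [coeff_X_pow_mul'] using hf.2.1

theorem X_pow_succ_dvd_sub (hf : HasLeadingTerm f β q) (hg : HasLeadingTerm g β q) :
    X ^ (q + 1) ∣ g - f := by
  refine X_pow_dvd_iff.mpr fun n hn => ?_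
  rw [map_sub, sub_eq_zero]
  rcases (Nat.lt_succ_iff.mp hn).lt_or_eq with hn | rfl
  · rw [hf.2.2 n hn, hg.2.2 n hn]
  · rw [hf.2.1, hg.2.1]

theorem of_X_pow_succ_dvd_sub (hf : HasLeadingTerm f β q) (h : X ^ (q + 1) ∣ g - f) :
    HasLeadingTerm g β q := by
  have hcoeff : ∀ n ≤ q, coeff n g = coeff n f := fun n hn => by
    have h' := X_pow_dvd_iff.mp h n (Nat.lt_succ_of_le hn)
    rwa [map_sub, sub_eq_zero] at h'
  exact ⟨hf.1, (hcoeff q le_rfl).trans hf.2.1, fun n hn => (hcoeff n hn.le).trans (hf.2.2 n hn)⟩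

theorem X_pow_dvd_of_X_pow_dvd_mul {a d : ℂ⟦X⟧} {n : ℕ} (ha : HasLeadingTerm a β q)
    (h : X ^ (q + n) ∣ a * d) : X ^ n ∣ d := by
  obtain ⟨g, rfl, hg⟩ := ha.exists_eq_X_pow_mul_s4
  have hunit : IsUnit g := isUnit_iff_constantCoeff.mpr (hg ▸ ha.1.isUnit)
  rw [pow_add, mul_assoc, mul_dvd_mul_iff_left (pow_ne_zero _ X_ne_zero)] at h
  exact hunit.dvd_mul_left.mp h

theorem X_pow_succ_dvd_sub_mul_C_mul_X_pow {a e : ℂ⟦X⟧} {N : ℕ} (ha : HasLeadingTerm a β q)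
    (hqN : q ≤ N) (he : X ^ N ∣ e) :
    X ^ (N + 1) ∣ e - a * (C (coeff N e / β) * X ^ (N - q)) := by
  obtain ⟨g, rfl, hg⟩ := ha.exists_eq_X_pow_mul_s4
  obtain ⟨e, rfl⟩ := he
  have hN : X ^ q * X ^ (N - q) = (X : ℂ⟦X⟧) ^ N := by rw [← pow_add, Nat.add_sub_cancel' hqN]
  have hcoeff : coeff N (X ^ N * e) = constantCoeff e := by simp [coeff_X_pow_mul']
  rw [hcoeff, show X ^ N * e - X ^ q * g * (C (constantCoeff e / β) * X ^ (N - q))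
      = X ^ N * (e - C (constantCoeff e / β) * g) by rw [← hN]; ring, pow_succ]
  exact mul_dvd_mul_left _ (X_dvd_iff.mpr (by simp [hg, div_mul_cancel₀ _ ha.1]))

end HasLeadingTerm

/-- The coefficient of `m* = (3σ − 2)·m`, where `σ` is the constant term. -/
def starCoeff (β : ℂ) (q : ℕ) : ℂ :=
  if q = 0 then β else -2 * β

theorem HasLeadingTerm.three_mul_sq_sub_two_mul {f : ℂ⟦X⟧} {β : ℂ} {q : ℕ}
    (hf : HasLeadingTerm f β q) (hβ : q = 0 → β = 1) :
    HasLeadingTerm (3 * f ^ 2 - 2 * f) (starCoeff β q) q := by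
  obtain ⟨g, rfl, hg⟩ := hf.exists_eq_X_pow_mul_s4
  rw [show 3 * (X ^ q * g) ^ 2 - 2 * (X ^ q * g) = X ^ q * (3 * X ^ q * g ^ 2 - 2 * g) by ring]
  rcases Nat.eq_zero_or_pos q with rfl | hq
  · refine hasLeadingTerm_X_pow_mul (by simp [starCoeff, hf.1]) ?_
    simp [starCoeff, hg, hβ rfl, map_ofNat]
    norm_num
  · refine hasLeadingTerm_X_pow_mul (by simp [starCoeff, hq.ne', hf.1]) ?_
    simp [starCoeff, hq.ne', hg, map_ofNat]

theorem isEscapeSolution_iff {p μ : ℕ} {u : ℕ → ℂ⟦X⟧} :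
    IsEscapeSolution p μ u ↔ u p = 0 ∧ ∀ j, 1 ≤ j → j < p → Err μ u j = 0 := by
  simp only [IsEscapeSolution, Err, sub_eq_zero]

theorem err_sub_err (μ : ℕ) (v v' : ℕ → ℂ⟦X⟧) (j : ℕ) :
    Err μ v' j - Err μ v j = X ^ (2 * μ) * ((v' (j + 1) - v (j + 1)) - (v' 1 - v 1))
      - (3 * v j ^ 2 - 2 * v j) * (v' j - v j) - (3 * v j - 1) * (v' j - v j) ^ 2
      - (v' j - v j) ^ 3 := by
  simp only [Err]
  ring

theorem X_pow_dvd_err_sub_err {μ n : ℕ} {v v' : ℕ → ℂ⟦X⟧} (h : ∀ i, X ^ n ∣ v' i - v i)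
    (j : ℕ) : X ^ n ∣ Err μ v' j - Err μ v j := by
  rw [err_sub_err]
  refine dvd_sub (dvd_sub (dvd_sub ?_ ((h j).mul_left _)) ?_) (dvd_pow (h j) three_ne_zero)
  · exact (dvd_sub (h _) (h _)).mul_left _
  · exact (dvd_pow (h j) two_ne_zero).mul_left _

/-- For `1 ≤ j < p`, corrects the coefficient of `X^(N - q j)` in `v j` so as to cancel the
coefficient of `X^N` in `Err μ v j`. -/
noncomputable def newtonStep (p μ : ℕ) (β : ℕ → ℂ) (q : ℕ → ℕ) (N : ℕ) (v : ℕ → ℂ⟦X⟧)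
    (j : ℕ) : ℂ⟦X⟧ :=
  if 1 ≤ j ∧ j < p then
    v j + C (coeff N (Err μ v j) / starCoeff (β j) (q j)) * X ^ (N - q j)
  else v j

noncomputable def newtonSeq (p μ : ℕ) (β : ℕ → ℂ) (q : ℕ → ℕ) (Q : ℕ) (w : ℕ → ℂ⟦X⟧) :
    ℕ → ℕ → ℂ⟦X⟧
  | 0 => w
  | k + 1 => newtonStep p μ β q (Q + k) (newtonSeq p μ β q Q w k)

section Newton

variable {p μ : ℕ} {β : ℕ → ℂ} {q : ℕ → ℕ}

theorem X_pow_dvd_newtonStep_sub {N m j : ℕ} (v : ℕ → ℂ⟦X⟧)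
    (hm : 1 ≤ j → j < p → m + q j ≤ N) : X ^ m ∣ newtonStep p μ β q N v j - v j := by
  unfold newtonStep
  split_ifs with hj
  · rw [add_sub_cancel_left]
    exact (pow_dvd_pow X (by have := hm hj.1 hj.2; omega)).trans (dvd_mul_left _ _)
  · simp

theorem X_pow_succ_dvd_err_newtonStep {N j : ℕ} {v : ℕ → ℂ⟦X⟧}
    (hlead : ∀ j, 1 ≤ j → j < p → HasLeadingTerm (v j) (β j) (q j))
    (hβ : ∀ j, 1 ≤ j → j < p → q j = 0 → β j = 1)
    (hq : ∀ j, 1 ≤ j → j < p → q j < 2 * μ)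
    (hN : ∀ j, 1 ≤ j → j < p → 2 * q j < N)
    (hE : ∀ j, 1 ≤ j → j < p → X ^ N ∣ Err μ v j) (hj1 : 1 ≤ j) (hjp : j < p) :
    X ^ (N + 1) ∣ Err μ (newtonStep p μ β q N v) j := by
  set v' := newtonStep p μ β q N v
  have hNj := hN j hj1 hjp
  have hshift : ∀ i, X ^ (N + 1) ∣ X ^ (2 * μ) * (v' i - v i) := fun i => by
    have hi : X ^ (N + 1 - 2 * μ) ∣ v' i - v i := X_pow_dvd_newtonStep_sub v fun h1 h2 => by
      have := hq i h1 h2; have := hN i h1 h2; omega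
    refine (pow_dvd_pow X (show N + 1 ≤ 2 * μ + (N + 1 - 2 * μ) by omega)).trans ?_
    rw [pow_add]
    exact mul_dvd_mul_left _ hi
  have hcorr : X ^ (N + 1) ∣ Err μ v j - (3 * v j ^ 2 - 2 * v j) * (v' j - v j) := by
    have hδ : v' j - v j = C (coeff N (Err μ v j) / starCoeff (β j) (q j)) * X ^ (N - q j) := by
      simp [v', newtonStep, hj1, hjp]
    rw [hδ]
    have hstar := (hlead j hj1 hjp).three_mul_sq_sub_two_mul (hβ j hj1 hjp)
    exact hstar.X_pow_succ_dvd_sub_mul_C_mul_X_pow (by omega) (hE j hj1 hjp)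
  have hsq : X ^ (N + 1) ∣ (v' j - v j) ^ 2 := by
    have hδ : X ^ (N - q j) ∣ v' j - v j := X_pow_dvd_newtonStep_sub v fun _ _ => by omega
    have h := pow_dvd_pow_of_dvd hδ 2
    rw [← pow_mul] at h
    exact (pow_dvd_pow X (by omega)).trans h
  have hexp : Err μ v' j = (Err μ v j - (3 * v j ^ 2 - 2 * v j) * (v' j - v j))
      + X ^ (2 * μ) * (v' (j + 1) - v (j + 1)) - X ^ (2 * μ) * (v' 1 - v 1)
      - (3 * v j - 1) * (v' j - v j) ^ 2 - (v' j - v j) ^ 2 * (v' j - v j) := by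
    linear_combination err_sub_err μ v v' j
  rw [hexp]
  exact dvd_sub (dvd_sub (dvd_sub (dvd_add hcorr (hshift _)) (hshift _)) (hsq.mul_left _))
    (hsq.mul_right _)

variable {Q : ℕ} {w : ℕ → ℂ⟦X⟧}

theorem newtonSeq_self (hwp : w p = 0) (k : ℕ) : newtonSeq p μ β q Q w k p = 0 := by
  induction k with
  | zero => exact hwp
  | succ k ih => simpa [newtonSeq, newtonStep] using ih

theorem hasLeadingTerm_newtonSeq {j : ℕ} (hwl : HasLeadingTerm (w j) (β j) (q j))
    (hQ : 2 * q j < Q) (k : ℕ) : HasLeadingTerm (newtonSeq p μ β q Q w k j) (β j) (q j) := by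
  induction k with
  | zero => exact hwl
  | succ k ih =>
    exact ih.of_X_pow_succ_dvd_sub (X_pow_dvd_newtonStep_sub (N := Q + k) _ fun _ _ => by omega)

theorem X_pow_dvd_err_newtonSeq
    (hβ : ∀ j, 1 ≤ j → j < p → q j = 0 → β j = 1)
    (hq : ∀ j, 1 ≤ j → j < p → q j < 2 * μ)
    (hwl : ∀ j, 1 ≤ j → j < p → HasLeadingTerm (w j) (β j) (q j))
    (hQ : ∀ j, 1 ≤ j → j < p → 2 * q j < Q)
    (hE : ∀ j, 1 ≤ j → j < p → X ^ Q ∣ Err μ w j) (k : ℕ) :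
    ∀ j, 1 ≤ j → j < p → X ^ (Q + k) ∣ Err μ (newtonSeq p μ β q Q w k) j := by
  induction k with
  | zero => exact hE
  | succ k ih =>
    exact fun j h1 h2 => X_pow_succ_dvd_err_newtonStep (N := Q + k)
      (fun i h1 h2 => hasLeadingTerm_newtonSeq (hwl i h1 h2) (hQ i h1 h2) k) hβ hq
      (fun i h1 h2 => by have := hQ i h1 h2; omega) ih h1 h2

theorem exists_isEscapeSolution_hasLeadingTerm
    (hβ : ∀ j, 1 ≤ j → j < p → q j = 0 → β j = 1)
    (hq : ∀ j, 1 ≤ j → j < p → q j < 2 * μ) (hwp : w p = 0)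
    (hwl : ∀ j, 1 ≤ j → j < p → HasLeadingTerm (w j) (β j) (q j))
    (hQ : ∀ j, 1 ≤ j → j < p → 2 * q j < Q)
    (hE : ∀ j, 1 ≤ j → j < p → X ^ Q ∣ Err μ w j) :
    ∃ u, IsEscapeSolution p μ u ∧ ∀ j, 1 ≤ j → j < p → HasLeadingTerm (u j) (β j) (q j) := by
  set W := newtonSeq p μ β q Q w
  have hcauchy : ∀ j k, X ^ (k + 1) ∣ W (k + 1) j - W k j := fun j k =>
    X_pow_dvd_newtonStep_sub (N := Q + k) _ fun h1 h2 => by have := hQ j h1 h2; omega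
  choose u hu using fun j => exists_forall_X_pow_dvd_sub (f := fun k => W k j) (hcauchy j)
  refine ⟨u, isEscapeSolution_iff.mpr ⟨?_, fun j h1 h2 => ?_⟩, fun j h1 h2 => ?_⟩
  · refine eq_zero_of_forall_X_pow_dvd fun k => (pow_dvd_pow X k.le_succ).trans ?_
    simpa [W, newtonSeq_self hwp] using hu p k
  · refine eq_zero_of_forall_X_pow_dvd fun k => (pow_dvd_pow X k.le_succ).trans ?_
    have hWk := X_pow_dvd_err_newtonSeq hβ hq hwl hQ hE k j h1 h2
    rw [← sub_add_cancel (Err μ u j) (Err μ (W k) j)]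
    exact dvd_add (X_pow_dvd_err_sub_err (fun i => hu i k) j)
      ((pow_dvd_pow X (by have := hQ j h1 h2; omega)).trans hWk)
  · exact (hasLeadingTerm_newtonSeq (hwl j h1 h2) (hQ j h1 h2) (q j)).of_X_pow_succ_dvd_sub
      (hu j (q j))

end Newton

theorem eq_of_isEscapeSolution_of_hasLeadingTerm {p μ : ℕ} {β : ℕ → ℂ} {q : ℕ → ℕ}
    {u u' : ℕ → ℂ⟦X⟧}
    (hβ : ∀ j, 1 ≤ j → j < p → q j = 0 → β j = 1)
    (hq : ∀ j, 1 ≤ j → j < p → q j < 2 * μ)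
    (hu : IsEscapeSolution p μ u) (hu' : IsEscapeSolution p μ u')
    (hlead : ∀ j, 1 ≤ j → j < p → HasLeadingTerm (u j) (β j) (q j))
    (hlead' : ∀ j, 1 ≤ j → j < p → HasLeadingTerm (u' j) (β j) (q j)) :
    ∀ j, 1 ≤ j → j ≤ p → u' j = u j := by
  rw [isEscapeSolution_iff] at hu hu'
  have hdvd : ∀ n j, 1 ≤ j → j ≤ p → X ^ n ∣ u' j - u j := by
    intro n
    induction n with
    | zero => simp
    | succ n ih =>
      intro j h1 hjp
      rcases hjp.lt_or_eq with hjp | rfl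
      swap
      · simp [hu.1, hu'.1]
      have hsq : X ^ (q j + (n + 1)) ∣ (u' j - u j) ^ 2 := by
        rw [sq, show q j + (n + 1) = q j + 1 + n by omega, pow_add]
        exact mul_dvd_mul ((hlead j h1 hjp).X_pow_succ_dvd_sub (hlead' j h1 hjp)) (ih j h1 hjp.le)
      have hlin : (3 * u j ^ 2 - 2 * u j) * (u' j - u j)
          = X ^ (2 * μ) * ((u' (j + 1) - u (j + 1)) - (u' 1 - u 1))
            - (3 * u j - 1) * (u' j - u j) ^ 2 - (u' j - u j) ^ 2 * (u' j - u j) := by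
        linear_combination err_sub_err μ u u' j - hu'.2 j h1 hjp + hu.2 j h1 hjp
      refine ((hlead j h1 hjp).three_mul_sq_sub_two_mul (hβ j h1 hjp)).X_pow_dvd_of_X_pow_dvd_mul ?_
      rw [hlin]
      refine dvd_sub (dvd_sub ?_ (hsq.mul_left _)) (hsq.mul_right _)
      have hshift : X ^ (2 * μ + n) ∣ X ^ (2 * μ) * ((u' (j + 1) - u (j + 1)) - (u' 1 - u 1)) := by
        rw [pow_add]
        exact mul_dvd_mul_left _ (dvd_sub (ih (j + 1) (by omega) hjp) (ih 1 le_rfl (by omega)))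
      exact (pow_dvd_pow X (by have := hq j h1 hjp; omega)).trans hshift
  exact fun j h1 hjp => sub_eq_zero.mp (eq_zero_of_forall_X_pow_dvd fun n => hdvd n j h1 hjp)

theorem existence_from_approximate_general (p μ : ℕ)
    (β : ℕ → ℂ) (q : ℕ → ℕ)
    (hmono : ∀ j, 1 ≤ j → j < p → (β j = 1 ∧ q j = 0) ∨ μ ≤ q j)
    (hq2 : ∀ j, 1 ≤ j → j < p → q j < 2 * μ)
    (w : ℕ → PowerSeries ℂ) (hwp : w p = 0)
    (hwl : ∀ j, 1 ≤ j → j < p → HasLeadingTerm (w j) (β j) (q j))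
    (Q : ℕ) (hQ : ∀ j, 1 ≤ j → j < p → 2 * q j < Q)
    (hE : ∀ j, 1 ≤ j → j < p → ∀ n < Q, PowerSeries.coeff n (Err μ w j) = 0) :
    ∃ u : ℕ → PowerSeries ℂ,
      (IsEscapeSolution p μ u ∧
        ∀ j, 1 ≤ j → j < p → HasLeadingTerm (u j) (β j) (q j)) ∧
      ∀ u' : ℕ → PowerSeries ℂ,
        (IsEscapeSolution p μ u' ∧
          ∀ j, 1 ≤ j → j < p → HasLeadingTerm (u' j) (β j) (q j)) →
        ∀ j, 1 ≤ j → j ≤ p → u' j = u j := by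
  have hβ1 : ∀ j, 1 ≤ j → j < p → q j = 0 → β j = 1 := fun j h1 h2 h0 =>
    ((hmono j h1 h2).resolve_right (by have := hq2 j h1 h2; omega)).1
  obtain ⟨u, hu, hlead⟩ := exists_isEscapeSolution_hasLeadingTerm hβ1 hq2 hwp hwl hQ
    fun j h1 h2 => X_pow_dvd_iff.mpr (hE j h1 h2)
  exact ⟨u, ⟨hu, hlead⟩, fun u' ⟨hu', hlead'⟩ =>
    eq_of_isEscapeSolution_of_hasLeadingTerm hβ1 hq2 hu hu' hlead hlead'⟩

/-- **Existence from an approximate solution.** Given monomials `m_j = β_j·X^{q_j}`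
(`β_j ≠ 0`) with either `m_j = 1` or `q_j ≥ μ`, and `q_j < 2μ` for all `j`, and an
approximate solution `w` (with `w_p = 0`) whose entries have leading terms `m_j` and
whose errors satisfy `ord(E_j(w)) ≥ Q` for some `Q > 2·max_j q_j`, there is a
(necessarily unique) solution `u` of the escape-region equations with each `u_j`
having leading term `m_j`. -/
theorem existence_from_approximate (p μ : ℕ) (hp : 1 ≤ p) (hμ : 1 ≤ μ)
    (β : ℕ → ℂ) (q : ℕ → ℕ)
    (hβ : ∀ j, 1 ≤ j → j < p → β j ≠ 0)
    (hmono : ∀ j, 1 ≤ j → j < p → (β j = 1 ∧ q j = 0) ∨ μ ≤ q j)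
    (hq2 : ∀ j, 1 ≤ j → j < p → q j < 2 * μ)
    (w : ℕ → PowerSeries ℂ) (hwp : w p = 0)
    (hwl : ∀ j, 1 ≤ j → j < p → HasLeadingTerm (w j) (β j) (q j))
    (Q : ℕ) (hQ : ∀ j, 1 ≤ j → j < p → 2 * q j < Q)
    (hE : ∀ j, 1 ≤ j → j < p → ∀ n < Q, PowerSeries.coeff n (Err μ w j) = 0) :
    ∃ u : ℕ → PowerSeries ℂ,
      (IsEscapeSolution p μ u ∧
        ∀ j, 1 ≤ j → j < p → HasLeadingTerm (u j) (β j) (q j)) ∧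
      ∀ u' : ℕ → PowerSeries ℂ,
        (IsEscapeSolution p μ u' ∧
          ∀ j, 1 ≤ j → j < p → HasLeadingTerm (u' j) (β j) (q j)) →
        ∀ j, 1 ≤ j → j ≤ p → u' j = u j :=
  existence_from_approximate_general p μ β q hmono hq2 w hwp hwl Q hQ hE
end

section
/- (Asymptotics in the case σ_j = 0.) Let (u₁,…,u_p) be a solution of the escape-region equations and let 1 ≤ j < p be such that σ_j = 0 (the constant term of u_j is 0). Then u_j² and X^{2μ}·(u₁ − u_{j+1}) have the same leading term: u_j = 0 if and only if u_{j+1} = u₁, and otherwise 2·ord(u_j) = 2μ + ord(u₁ − u_{j+1}) and the square of the leading coefficient of u_j equals the leading coefficient of u₁ − u_{j+1}. (In other words u_j ∼ ±ξ·√(u₁ − u_{j+1}).) -/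
open PowerSeries

namespace PowerSeries

theorem hasLeadingTerm_of_ne_zero {f : ℂ⟦X⟧} (hf : f ≠ 0) :
    HasLeadingTerm f (constantCoeff (divXPowOrder f)) f.order.toNat :=
  ⟨constantCoeff_divXPowOrder_eq_zero_iff.not.mpr hf, constantCoeff_divXPowOrder.symm,
    fun _ ↦ coeff_of_lt_order_toNat _⟩

variable {R : Type*} [CommRing R] {f g : R⟦X⟧} {m : ℕ}

theorem divXPowOrder_of_order_eq_zero (hf : f.order = 0) : divXPowOrder f = f := by
  ext n
  simp [hf]

variable [IsDomain R]

theorem order_one_sub_of_constantCoeff_eq_zero (hf : constantCoeff f = 0) :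
    (1 - f).order = 0 :=
  order_zero_of_unit (isUnit_iff_constantCoeff.mpr (by simp [hf]))

theorem divXPowOrder_X_pow (n : ℕ) : divXPowOrder (X ^ n : R⟦X⟧) = 1 := by
  rw [divXPowOrder_pow, divXPowOrder_X, one_pow]

section
variable (hf : constantCoeff f = 0) (h : X ^ m * g = f ^ 2 * (1 - f))
include hf h

theorem add_order_eq_two_nsmul_order_of_X_pow_mul_eq : m + g.order = 2 • f.order := by
  simpa [order_mul, order_pow, order_one_sub_of_constantCoeff_eq_zero hf] using
    congrArg order h

theorem eq_zero_iff_of_X_pow_mul_eq : f = 0 ↔ g = 0 := by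
  have h1f : 1 - f ≠ 0 := fun h0 ↦ by
    simpa [h0] using order_one_sub_of_constantCoeff_eq_zero hf
  constructor
  · rintro rfl
    simpa using h
  · rintro rfl
    simpa [h1f] using h.symm

theorem two_mul_order_toNat_of_X_pow_mul_eq (hf0 : f ≠ 0) :
    2 * f.order.toNat = m + g.order.toNat := by
  have hg0 : g ≠ 0 := (eq_zero_iff_of_X_pow_mul_eq hf h).not.mp hf0
  have := add_order_eq_two_nsmul_order_of_X_pow_mul_eq hf h
  rw [← coe_toNat_order hf0, ← coe_toNat_order hg0, nsmul_eq_mul] at this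
  exact_mod_cast this.symm

theorem leadingCoeff_sq_of_X_pow_mul_eq :
    constantCoeff (divXPowOrder f) ^ 2 = constantCoeff (divXPowOrder g) := by
  simpa [divXPowOrder_mul, divXPowOrder_pow, divXPowOrder_X_pow,
    divXPowOrder_of_order_eq_zero (order_one_sub_of_constantCoeff_eq_zero hf), hf] using
    (congrArg (constantCoeff ∘ divXPowOrder) h).symm

end

end PowerSeries

theorem asymptotics_sigma_zero_general (p μ : ℕ)
    (u : ℕ → PowerSeries ℂ) (hu : IsEscapeSolution p μ u)
    (j : ℕ) (hj1 : 1 ≤ j) (hjp : j < p)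
    (hσ : PowerSeries.constantCoeff (u j) = 0) :
    (u j = 0 ↔ u (j + 1) = u 1) ∧
    (u j ≠ 0 → ∃ (β γ : ℂ) (q k : ℕ),
      HasLeadingTerm (u j) β q ∧
      HasLeadingTerm (u 1 - u (j + 1)) γ k ∧
      2 * q = 2 * μ + k ∧ β ^ 2 = γ) := by
  have hrel : X ^ (2 * μ) * (u 1 - u (j + 1)) = u j ^ 2 * (1 - u j) := by
    linear_combination -hu.2 j hj1 hjp
  have hzero := eq_zero_iff_of_X_pow_mul_eq hσ hrel
  refine ⟨hzero.trans (sub_eq_zero.trans eq_comm), fun hf ↦ ?_⟩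
  exact ⟨_, _, _, _, hasLeadingTerm_of_ne_zero hf, hasLeadingTerm_of_ne_zero (hzero.not.mp hf),
    two_mul_order_toNat_of_X_pow_mul_eq hσ hrel hf, leadingCoeff_sq_of_X_pow_mul_eq hσ hrel⟩

/-- **Asymptotics in the case `σ_j = 0`.** If the constant term of `u_j` is `0`, then
`u_j²` and `X^{2μ}(u₁ − u_{j+1})` have the same leading term: `u_j = 0` iff
`u_{j+1} = u₁`, and otherwise `2·ord(u_j) = 2μ + ord(u₁ − u_{j+1})` with the square of
the leading coefficient of `u_j` equal to the leading coefficient of `u₁ − u_{j+1}`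
(i.e. `u_j ∼ ±ξ·√(u₁ − u_{j+1})`). -/
theorem asymptotics_sigma_zero (p μ : ℕ) (hp : 1 ≤ p) (hμ : 1 ≤ μ)
    (u : ℕ → PowerSeries ℂ) (hu : IsEscapeSolution p μ u)
    (j : ℕ) (hj1 : 1 ≤ j) (hjp : j < p)
    (hσ : PowerSeries.constantCoeff (u j) = 0) :
    (u j = 0 ↔ u (j + 1) = u 1) ∧
    (u j ≠ 0 → ∃ (β γ : ℂ) (q k : ℕ),
      HasLeadingTerm (u j) β q ∧
      HasLeadingTerm (u 1 - u (j + 1)) γ k ∧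
      2 * q = 2 * μ + k ∧ β ^ 2 = γ) :=
  asymptotics_sigma_zero_general p μ u hu j hj1 hjp hσ
end

section
/- (Existence and uniqueness for trivial kneading sequence.) Let p ≥ 1 and let c₁,…,c_{p−1} ∈ ℂ satisfy c_{j+1} = c_j² + c₁ for 1 ≤ j < p, where c_p := 0 (so that 0 ↦ c₁ ↦ ⋯ ↦ c_{p−1} ↦ 0 is a period-p critical orbit of the quadratic map z ↦ z² + c₁). Take μ = 1, so that the escape-region equations read X²·(u_{j+1} − u₁) = u_j²·(u_j − 1) in ℂ[[X]]. Then there exists exactly one solution (u₁,…,u_p) (with u_p = 0) such that each u_j is supported in even degrees (a power series in X²) and u_j ≡ −c_j·X² (mod X⁴). Moreover every coefficient of every u_j lies in the subfield ℚ(c₁) ⊆ ℂ. -/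
/-!
Write `c_j` for the critical orbit of `z ↦ z² + c₁`. Comparing coefficients of `X^{M+2}` in the
escape equations, the coefficients `δ_j` of `X^M` (for `M ≥ 3`) enter only linearly, through
`δ_{j+1} = δ₁ + 2 c_j δ_j + e_j` with `δ_p = 0`, where `e_j` depends only on lower coefficients.
The solution of this recursion is affine in `δ₁` with slope `A_j = dc_j/dc₁`, and `A_p ≠ 0` by
Gleason's lemma: `c₁` is an algebraic integer and `A_p ≡ 1 mod 2`. So every coefficient is
determined (uniqueness) and can be solved for (existence), over any field containing `c₁`,
in particular over `ℚ(c₁)`. Since `X ↦ -X` preserves the equations and the normalization,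
uniqueness forces the solution to be even.
-/

open PowerSeries

section QuadOrbit

variable {R S : Type*} [CommRing R] [CommRing S]

def quadOrbit (x : R) : ℕ → R
  | 0 => 0
  | n + 1 => quadOrbit x n ^ 2 + x

theorem monic_quadOrbit_X (n : ℕ) :
    (quadOrbit (Polynomial.X (R := ℤ)) (n + 1)).Monic ∧
      (quadOrbit (Polynomial.X (R := ℤ)) (n + 1)).natDegree = 2 ^ n := by
  induction n with
  | zero => simp [quadOrbit]
  | succ n ih =>
    obtain ⟨hmon, hdeg⟩ := ih
    have hlt : (Polynomial.X (R := ℤ)).degree <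
        (quadOrbit (Polynomial.X (R := ℤ)) (n + 1) ^ 2).degree := by
      rw [Polynomial.degree_eq_natDegree (hmon.pow 2).ne_zero, hmon.natDegree_pow, hdeg,
        Polynomial.degree_X]
      exact_mod_cast (by have := Nat.one_le_two_pow (n := n); omega : 1 < 2 * 2 ^ n)
    refine ⟨(hmon.pow 2).add_of_left hlt, ?_⟩
    rw [quadOrbit, Polynomial.natDegree_add_eq_left_of_degree_lt hlt, hmon.natDegree_pow, hdeg]
    ring

theorem map_quadOrbit {F : Type*} [FunLike F R S] [RingHomClass F R S] (f : F) (x : R)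
    (n : ℕ) : f (quadOrbit x n) = quadOrbit (f x) n := by
  induction n with
  | zero => simp [quadOrbit]
  | succ n ih => simp [quadOrbit, ih]

theorem eq_quadOrbit {p : ℕ} {c : ℕ → R}
    (hc : ∀ j, 1 ≤ j → j < p → c (j + 1) = c j ^ 2 + c 1) :
    ∀ j, 1 ≤ j → j ≤ p → c j = quadOrbit (c 1) j
  | 1, _, _ => by simp [quadOrbit]
  | j + 2, _, hj => by
    rw [hc (j + 1) (by omega) (by omega), eq_quadOrbit hc (j + 1) (by omega) (by omega)]
    rfl

theorem isIntegral_of_quadOrbit_eq_zero {x : R} {p : ℕ}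
    (hp : 1 ≤ p) (hx : quadOrbit x p = 0) : IsIntegral ℤ x := by
  obtain ⟨n, rfl⟩ : ∃ n, p = n + 1 := ⟨p - 1, by omega⟩
  refine ⟨_, (monic_quadOrbit_X n).1, ?_⟩
  rw [← Polynomial.aeval_def, map_quadOrbit, Polynomial.aeval_X, hx]

theorem IsIntegral.quadOrbit {A : Type*} [CommRing A] [Algebra A R] {x : R}
    (hx : IsIntegral A x) (n : ℕ) : IsIntegral A (quadOrbit x n) := by
  induction n with
  | zero => exact isIntegral_zero
  | succ n ih => exact (ih.pow 2).add hx

end QuadOrbit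

theorem IsIntegral.one_add_two_mul_ne_zero {K : Type*} [Field K] [CharZero K] {β : K}
    (hβ : IsIntegral ℤ β) : 1 + 2 * β ≠ 0 := by
  intro h
  have hβ' : β = algebraMap ℚ K (-1 / 2) := by
    rw [map_div₀, map_neg, map_one, map_ofNat]
    linear_combination h / 2
  rw [hβ', isIntegral_algebraMap_iff (algebraMap ℚ K).injective] at hβ
  obtain ⟨y, hy⟩ := IsIntegrallyClosed.isIntegral_iff.mp hβ
  have : (2 * y : ℚ) = -1 := by rw [show (y : ℚ) = algebraMap ℤ ℚ y from rfl, hy]; norm_num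
  have : 2 * y = -1 := by exact_mod_cast this
  omega

section LinOrbit

variable {R : Type*} [CommRing R] (c : ℕ → R)

-- When `c` is the critical orbit, `linOrbit c 0 1 j` is the derivative `dc_j/dc₁`.
def linOrbit (e : ℕ → R) (y : R) : ℕ → R
  | 0 => 0
  | 1 => y
  | j + 2 => y + 2 * c (j + 1) * linOrbit e y (j + 1) + e (j + 1)

variable {c}

theorem linOrbit_succ (e : ℕ → R) (y : R) {j : ℕ} (hj : 1 ≤ j) :
    linOrbit c e y (j + 1) = y + 2 * c j * linOrbit c e y j + e j := by
  obtain ⟨j, rfl⟩ : ∃ i, j = i + 1 := ⟨j - 1, by omega⟩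
  rfl

theorem linOrbit_eq_mul_add (e : ℕ → R) (y : R) :
    ∀ j, linOrbit c e y j = y * linOrbit c 0 1 j + linOrbit c e 0 j
  | 0 => by simp [linOrbit]
  | 1 => by simp [linOrbit]
  | j + 2 => by
    simp only [linOrbit, linOrbit_eq_mul_add e y (j + 1), Pi.zero_apply]
    ring

def IsLinearizedSolution (c e : ℕ → R) (p : ℕ) (d : ℕ → R) : Prop :=
  d p = 0 ∧ ∀ j, 1 ≤ j → j < p → d (j + 1) = d 1 + 2 * c j * d j + e j

theorem IsLinearizedSolution.eq_linOrbit {e d : ℕ → R} {p : ℕ}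
    (hd : IsLinearizedSolution c e p d) :
    ∀ j, 1 ≤ j → j ≤ p → d j = linOrbit c e (d 1) j
  | 1, _, _ => rfl
  | j + 2, _, hj => by
    rw [hd.2 (j + 1) (by omega) (by omega), hd.eq_linOrbit (j + 1) (by omega) (by omega),
      linOrbit_succ e _ (by omega : 1 ≤ j + 1)]

theorem IsLinearizedSolution.eq [IsDomain R] {e d d' : ℕ → R} {p : ℕ}
    (hA : linOrbit c 0 1 p ≠ 0) (hd : IsLinearizedSolution c e p d)
    (hd' : IsLinearizedSolution c e p d') :
    ∀ j, 1 ≤ j → j ≤ p → d j = d' j := by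
  intro j hj hjp
  have hp : 1 ≤ p := hj.trans hjp
  have h1 : d 1 = d' 1 := by
    have h : d 1 * linOrbit c 0 1 p + linOrbit c e 0 p =
        d' 1 * linOrbit c 0 1 p + linOrbit c e 0 p := by
      rw [← linOrbit_eq_mul_add, ← linOrbit_eq_mul_add, ← hd.eq_linOrbit p hp le_rfl,
        ← hd'.eq_linOrbit p hp le_rfl, hd.1, hd'.1]
    exact mul_right_cancel₀ hA (add_right_cancel h)
  rw [hd.eq_linOrbit j hj hjp, hd'.eq_linOrbit j hj hjp, h1]

theorem linOrbit_ne_zero {K : Type*} [Field K] [CharZero K] {c : ℕ → K} {p : ℕ} (hp : 1 ≤ p)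
    (hcp : c p = 0) (hc : ∀ j, 1 ≤ j → j < p → c (j + 1) = c j ^ 2 + c 1) :
    linOrbit c 0 1 p ≠ 0 := by
  have hx : IsIntegral ℤ (c 1) :=
    isIntegral_of_quadOrbit_eq_zero hp (eq_quadOrbit hc p hp le_rfl ▸ hcp)
  have hcint : ∀ j, 1 ≤ j → j ≤ p → IsIntegral ℤ (c j) := fun j hj hjp =>
    eq_quadOrbit hc j hj hjp ▸ hx.quadOrbit j
  have hAint : ∀ j, j ≤ p → IsIntegral ℤ (linOrbit c 0 1 j) := by
    intro j
    induction j with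
    | zero => exact fun _ => isIntegral_zero
    | succ j ih =>
      intro hj
      rcases Nat.eq_zero_or_pos j with rfl | hj0
      · exact isIntegral_one
      rw [linOrbit_succ 0 1 hj0, Pi.zero_apply, add_zero, two_mul, add_mul]
      have hcA := (hcint j hj0 (by omega)).mul (ih (by omega))
      exact isIntegral_one.add (hcA.add hcA)
  obtain _ | _ | q := p
  · omega
  · simp [linOrbit]
  · rw [linOrbit_succ 0 1 (by omega), Pi.zero_apply, add_zero, mul_assoc]
    exact ((hcint _ le_add_self (by omega)).mul (hAint _ (by omega))).one_add_two_mul_ne_zero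

end LinOrbit

section Escape

variable {R : Type*} [CommRing R]

-- `Err 1`, over an arbitrary commutative ring.
noncomputable def escErr (w : ℕ → R⟦X⟧) (j : ℕ) : R⟦X⟧ :=
  X ^ 2 * (w (j + 1) - w 1) - w j ^ 2 * (w j - 1)

theorem escErr_add_X_pow_mul {w : ℕ → R⟦X⟧} {a : R} {j M : ℕ}
    (hw : X ^ 3 ∣ w j + C a * X ^ 2) (hM : 3 ≤ M) (r : ℕ → R⟦X⟧) :
    ∃ s, escErr (fun i => w i + X ^ M * r i) j =
      escErr w j + X ^ (M + 2) * (r (j + 1) - r 1 - 2 * C a * r j + X * s) := by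
  obtain ⟨v, hv⟩ := hw
  obtain ⟨m, rfl⟩ : ∃ m, M = m + 3 := ⟨M - 3, by omega⟩
  have hwj : w j = X ^ 3 * v - C a * X ^ 2 := by rw [← hv]; ring
  refine ⟨-(r j * (3 * X * (X * v - C a) ^ 2 + 3 * (X * v - C a) * X ^ (m + 2) * r j
    + X ^ (2 * m + 3) * r j ^ 2 - 2 * v - X ^ m * r j)), ?_⟩
  simp only [escErr, hwj]
  ring

theorem coeff_escErr_add_X_pow_mul_of_lt {w : ℕ → R⟦X⟧} {a : R} {j M n : ℕ}
    (hw : X ^ 3 ∣ w j + C a * X ^ 2) (hM : 3 ≤ M) (r : ℕ → R⟦X⟧) (hn : n < M + 2) :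
    coeff n (escErr (fun i => w i + X ^ M * r i) j) = coeff n (escErr w j) := by
  obtain ⟨s, hs⟩ := escErr_add_X_pow_mul hw hM r
  rw [hs, map_add, coeff_X_pow_mul', if_neg (by omega), add_zero]

theorem coeff_escErr_add_X_pow_mul {w : ℕ → R⟦X⟧} {a : R} {j M : ℕ}
    (hw : X ^ 3 ∣ w j + C a * X ^ 2) (hM : 3 ≤ M) (r : ℕ → R⟦X⟧) :
    coeff (M + 2) (escErr (fun i => w i + X ^ M * r i) j) = coeff (M + 2) (escErr w j) +
      (constantCoeff (r (j + 1)) - constantCoeff (r 1) - 2 * a * constantCoeff (r j)) := by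
  obtain ⟨s, hs⟩ := escErr_add_X_pow_mul hw hM r
  rw [hs, map_add, coeff_X_pow_mul', if_pos le_rfl, Nat.sub_self]
  simp [map_ofNat]

theorem X_pow_three_dvd_add_C_mul_X_sq_iff {f : R⟦X⟧} {b : R} :
    X ^ 3 ∣ f + C b * X ^ 2 ↔ coeff 0 f = 0 ∧ coeff 1 f = 0 ∧ coeff 2 f = -b := by
  rw [X_pow_dvd_iff]
  refine ⟨fun h => ⟨by simpa using h 0 (by norm_num), by simpa using h 1 (by norm_num),
    eq_neg_of_add_eq_zero_left (by simpa using h 2 (by norm_num))⟩, fun ⟨h0, h1, h2⟩ m hm => ?_⟩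
  rw [coeff_zero_eq_constantCoeff_apply] at h0
  interval_cases m <;> simp [h0, h1, h2]

def EscapeEquations (p : ℕ) (u : ℕ → R⟦X⟧) : Prop :=
  u p = 0 ∧ ∀ j, 1 ≤ j → j < p → escErr u j = 0

theorem EscapeEquations.map {S : Type*} [CommRing S] {p : ℕ} {u : ℕ → R⟦X⟧}
    (hu : EscapeEquations p u) (f : R →+* S) :
    EscapeEquations p fun j => PowerSeries.map f (u j) := by
  have h : ∀ j, escErr (fun j => PowerSeries.map f (u j)) j = PowerSeries.map f (escErr u j) :=
    fun j => by simp [escErr]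
  exact ⟨by simp [hu.1], fun j hj hjp => by rw [h, hu.2 j hj hjp, map_zero]⟩

theorem EscapeEquations.rescale_neg_one {p : ℕ} {u : ℕ → R⟦X⟧} (hu : EscapeEquations p u) :
    EscapeEquations p fun j => rescale (-1) (u j) := by
  have h : ∀ j, escErr (fun j => rescale (-1) (u j)) j = rescale (-1) (escErr u j) :=
    fun j => by simp [escErr]
  exact ⟨by simp [hu.1], fun j hj hjp => by rw [h, hu.2 j hj hjp, map_zero]⟩

end Escape

section Uniqueness

variable {R : Type*} [CommRing R] [IsDomain R] {c : ℕ → R} {p : ℕ} {u u' : ℕ → R⟦X⟧}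

theorem EscapeEquations.eq_of_normalized (hA : linOrbit c 0 1 p ≠ 0)
    (hu : EscapeEquations p u) (hu' : EscapeEquations p u')
    (hn : ∀ j, 1 ≤ j → j < p → X ^ 3 ∣ u j + C (c j) * X ^ 2)
    (hn' : ∀ j, 1 ≤ j → j < p → X ^ 3 ∣ u' j + C (c j) * X ^ 2) :
    ∀ j, 1 ≤ j → j ≤ p → u j = u' j := by
  suffices h : ∀ M j, 1 ≤ j → j ≤ p → coeff M (u j - u' j) = 0 from
    fun j hj hjp => sub_eq_zero.1 (ext fun M => by simpa using h M j hj hjp)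
  intro M
  induction M using Nat.strong_induction_on with
  | _ M ih =>
  intro j hj hjp
  have hp1 : 1 ≤ p := hj.trans hjp
  rcases lt_or_ge M 3 with hM | hM
  · rcases hjp.lt_or_eq with hjp | rfl
    · simpa using X_pow_dvd_iff.1 (dvd_sub (hn j hj hjp) (hn' j hj hjp)) M hM
    · rw [hu.1, hu'.1, sub_zero, map_zero]
  have : ∀ i, ∃ r, 1 ≤ i → i ≤ p → u i = u' i + X ^ M * r := fun i => by
    by_cases hi : 1 ≤ i ∧ i ≤ p
    · obtain ⟨r, hr⟩ := X_pow_dvd_iff.2 fun m hm => ih m hm i hi.1 hi.2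
      exact ⟨r, fun _ _ => by rw [← hr]; ring⟩
    · exact ⟨0, fun h1 h2 => absurd ⟨h1, h2⟩ hi⟩
  choose r hr using this
  have hδ : ∀ i, 1 ≤ i → i ≤ p → coeff M (u i - u' i) = constantCoeff (r i) :=
    fun i h1 h2 => by simp [hr i h1 h2, coeff_X_pow_mul']
  have hlin : IsLinearizedSolution c 0 p fun i => constantCoeff (r i) := by
    refine ⟨by dsimp only; rw [← hδ p hp1 le_rfl, hu.1, hu'.1, sub_zero, map_zero],
      fun j hj hjp => ?_⟩
    have h := coeff_escErr_add_X_pow_mul (hn' j hj hjp) hM r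
    have hsub : escErr (fun i => u' i + X ^ M * r i) j = escErr u j := by
      simp only [escErr, ← hr 1 le_rfl hp1, ← hr j hj hjp.le, ← hr (j + 1) (by omega) hjp]
    rw [hsub, hu.2 j hj hjp, hu'.2 j hj hjp] at h
    rw [Pi.zero_apply]
    linear_combination -h
  rw [hδ j hj hjp, hlin.eq hA (d' := 0) ⟨rfl, fun _ _ _ => by simp⟩ j hj hjp, Pi.zero_apply]

theorem EscapeEquations.coeff_odd_eq_zero [CharZero R] (hA : linOrbit c 0 1 p ≠ 0)
    (hu : EscapeEquations p u) (hn : ∀ j, 1 ≤ j → j < p → X ^ 3 ∣ u j + C (c j) * X ^ 2)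
    {j : ℕ} (hj : 1 ≤ j) (hjp : j ≤ p) {n : ℕ} (hodd : Odd n) : coeff n (u j) = 0 := by
  have hn' : ∀ j, 1 ≤ j → j < p → X ^ 3 ∣ rescale (-1) (u j) + C (c j) * X ^ 2 := by
    intro j hj hjp
    obtain ⟨h0, h1, h2⟩ := X_pow_three_dvd_add_C_mul_X_sq_iff.1 (hn j hj hjp)
    exact X_pow_three_dvd_add_C_mul_X_sq_iff.2 (by simp [coeff_rescale, h0, h1, h2])
  have h := congrArg (coeff n) (hu.rescale_neg_one.eq_of_normalized hA hu hn' hn j hj hjp)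
  rwa [coeff_rescale, hodd.neg_one_pow, neg_one_mul, CharZero.neg_eq_self_iff] at h

end Uniqueness

section Construction

variable {K : Type*} [Field K] (c : ℕ → K) (p : ℕ)

noncomputable def solveLinearized (e : ℕ → K) : ℕ → K :=
  linOrbit c e (-linOrbit c e 0 p / linOrbit c 0 1 p)

theorem isLinearizedSolution_solveLinearized (hA : linOrbit c 0 1 p ≠ 0) (e : ℕ → K) :
    IsLinearizedSolution c e p (solveLinearized c p e) := by
  refine ⟨?_, fun j hj _ => linOrbit_succ e _ hj⟩
  rw [solveLinearized, linOrbit_eq_mul_add]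
  field_simp
  ring

-- The coefficient of `X^M`, computed from the truncation `w` of the solution below degree `M`.
noncomputable def escapeCoeff (w : ℕ → K⟦X⟧) : ℕ → ℕ → K
  | 0 => 0
  | 1 => 0
  | 2 => fun j => -c j
  | M + 3 => solveLinearized c p fun j => -coeff (M + 5) (escErr w j)

noncomputable def escapeApprox : ℕ → ℕ → K⟦X⟧
  | 0 => 0
  | M + 1 => fun j => escapeApprox M j + monomial M (escapeCoeff c p (escapeApprox M) M j)

noncomputable def escapeSeries (j : ℕ) : K⟦X⟧ :=
  mk fun M => escapeCoeff c p (escapeApprox c p M) M j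

theorem coeff_escapeApprox (M m j : ℕ) :
    coeff m (escapeApprox c p M j) = if m < M then coeff m (escapeSeries c p j) else 0 := by
  induction M with
  | zero => simp [escapeApprox]
  | succ M ih =>
    simp only [escapeApprox, map_add, ih, coeff_monomial, escapeSeries, coeff_mk]
    split_ifs <;> first | omega | simp_all

theorem exists_escapeSeries_eq_add (M : ℕ) : ∃ r : ℕ → K⟦X⟧,
    escapeSeries c p = (fun i => escapeApprox c p M i + X ^ M * r i) ∧
      ∀ i, constantCoeff (r i) = coeff M (escapeSeries c p i) := by
  have : ∀ i, X ^ M ∣ escapeSeries c p i - escapeApprox c p M i := fun i =>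
    X_pow_dvd_iff.2 fun m hm => by simp [coeff_escapeApprox, hm]
  choose r hr using this
  refine ⟨r, funext fun i => by rw [← hr]; ring, fun i => ?_⟩
  simpa [coeff_escapeApprox, coeff_X_pow_mul'] using congrArg (coeff M) (hr i).symm

theorem X_pow_three_dvd_escapeSeries (j : ℕ) :
    X ^ 3 ∣ escapeSeries c p j + C (c j) * X ^ 2 :=
  X_pow_dvd_iff.2 fun m hm => by
    interval_cases m <;> simp [escapeSeries, escapeCoeff, coeff_X_pow]

theorem X_pow_three_dvd_escapeApprox {M : ℕ} (hM : 3 ≤ M) (j : ℕ) :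
    X ^ 3 ∣ escapeApprox c p M j + C (c j) * X ^ 2 := by
  have h : X ^ 3 ∣ escapeSeries c p j - escapeApprox c p M j :=
    X_pow_dvd_iff.2 fun m hm => by simp [coeff_escapeApprox, show m < M by omega]
  simpa [add_comm] using dvd_sub (X_pow_three_dvd_escapeSeries c p j) h

theorem escapeApprox_three : escapeApprox c p 3 = fun j => -(C (c j) * X ^ 2) := by
  ext j m
  rw [coeff_escapeApprox]
  split_ifs with hm
  · interval_cases m <;> simp [escapeSeries, escapeCoeff, coeff_X_pow]
  · simp [coeff_X_pow]; omega

theorem escErr_escapeApprox_three {j : ℕ} (hc : c (j + 1) = c j ^ 2 + c 1) :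
    escErr (escapeApprox c p 3) j = C (c j ^ 3) * X ^ 6 := by
  simp only [escErr, escapeApprox_three, hc, map_add, map_pow]
  ring

theorem escapeEquations_escapeSeries (hA : linOrbit c 0 1 p ≠ 0) (hcp : c p = 0)
    (hc : ∀ j, 1 ≤ j → j < p → c (j + 1) = c j ^ 2 + c 1) :
    EscapeEquations p (escapeSeries c p) := by
  refine ⟨?_, fun j hj hjp => ext fun n => ?_⟩
  · ext M
    rcases M with _ | _ | _ | M <;>
      simp [escapeSeries, escapeCoeff, hcp, (isLinearizedSolution_solveLinearized c p hA _).1]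
  rw [map_zero]
  rcases lt_or_ge n 5 with hn | hn
  · obtain ⟨r, hr, -⟩ := exists_escapeSeries_eq_add c p 3
    rw [hr, coeff_escErr_add_X_pow_mul_of_lt (X_pow_three_dvd_escapeApprox c p le_rfl j) le_rfl
      r hn, escErr_escapeApprox_three c p (hc j hj hjp), coeff_C_mul_X_pow, if_neg (by omega)]
  obtain ⟨M, rfl⟩ : ∃ M, n = M + 5 := ⟨n - 5, by omega⟩
  obtain ⟨r, hr, hr0⟩ := exists_escapeSeries_eq_add c p (M + 3)
  rw [hr, coeff_escErr_add_X_pow_mul (X_pow_three_dvd_escapeApprox c p (by omega) j) (by omega) r]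
  have hlin := (isLinearizedSolution_solveLinearized c p hA
    fun j => -coeff (M + 5) (escErr (escapeApprox c p (M + 3)) j)).2 j hj hjp
  simp only [hr0, escapeSeries, coeff_mk, escapeCoeff]
  linear_combination hlin

end Construction

theorem isEscapeSolution_one_iff {p : ℕ} {u : ℕ → ℂ⟦X⟧} :
    IsEscapeSolution p 1 u ↔ EscapeEquations p u := by
  simp [IsEscapeSolution, EscapeEquations, escErr, sub_eq_zero]

theorem exists_escapeEquations_coeff_mem {L : Type*} [Field L] [CharZero L] {p : ℕ} {c : ℕ → L}
    (hp : 1 ≤ p) (hcp : c p = 0) (hc : ∀ j, 1 ≤ j → j < p → c (j + 1) = c j ^ 2 + c 1)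
    {K : Subfield L} (hK : c 1 ∈ K) :
    ∃ u : ℕ → L⟦X⟧, EscapeEquations p u ∧ (∀ j, 1 ≤ j → j < p → X ^ 3 ∣ u j + C (c j) * X ^ 2) ∧
      ∀ j n, coeff n (u j) ∈ K := by
  set x : K := ⟨c 1, hK⟩
  have horbit : ∀ j, 1 ≤ j → j ≤ p → ((quadOrbit x j : K) : L) = c j := fun j hj hjp =>
    (map_quadOrbit K.subtype x j).trans (eq_quadOrbit hc j hj hjp).symm
  have hxp : quadOrbit x p = 0 := Subtype.ext ((horbit p hp le_rfl).trans hcp)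
  have hxc : ∀ j, 1 ≤ j → j < p → quadOrbit x (j + 1) = quadOrbit x j ^ 2 + quadOrbit x 1 :=
    fun j _ _ => by simp [quadOrbit]
  refine ⟨fun j => PowerSeries.map K.subtype (escapeSeries (quadOrbit x) p j),
    (escapeEquations_escapeSeries _ p (linOrbit_ne_zero hp hxp hxc) hxp hxc).map K.subtype,
    fun j hj hjp => ?_, fun j n => by simp⟩
  simpa [horbit j hj hjp.le] using
    map_dvd (PowerSeries.map K.subtype) (X_pow_three_dvd_escapeSeries (quadOrbit x) p j)

/-- **Existence and uniqueness for trivial kneading sequence.** Given a period-`p`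
critical orbit `0 ↦ c₁ ↦ ⋯ ↦ c_{p−1} ↦ 0` of `z ↦ z² + c₁` (with `c_p = 0`), and
taking `μ = 1`, there is exactly one solution `(u₁,…,u_p)` of the escape-region
equations such that each `u_j` is a power series in `X²` with
`u_j ≡ −c_j·X² (mod X⁴)`; moreover every coefficient of every `u_j` lies in the
smallest subfield `ℚ(c₁) ⊆ ℂ` containing `c₁`. -/
theorem trivial_kneading_exists_unique (p : ℕ) (hp : 1 ≤ p)
    (c : ℕ → ℂ) (hcp : c p = 0)
    (hc : ∀ j, 1 ≤ j → j < p → c (j + 1) = (c j) ^ 2 + c 1) :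
    ∃ u : ℕ → PowerSeries ℂ,
      (IsEscapeSolution p 1 u ∧
        ∀ j, 1 ≤ j → j < p →
          (∀ n : ℕ, Odd n → PowerSeries.coeff n (u j) = 0) ∧
          PowerSeries.coeff 0 (u j) = 0 ∧
          PowerSeries.coeff 1 (u j) = 0 ∧
          PowerSeries.coeff 2 (u j) = -(c j) ∧
          PowerSeries.coeff 3 (u j) = 0) ∧
      (∀ u' : ℕ → PowerSeries ℂ,
        (IsEscapeSolution p 1 u' ∧
          ∀ j, 1 ≤ j → j < p →
            (∀ n : ℕ, Odd n → PowerSeries.coeff n (u' j) = 0) ∧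
            PowerSeries.coeff 0 (u' j) = 0 ∧
            PowerSeries.coeff 1 (u' j) = 0 ∧
            PowerSeries.coeff 2 (u' j) = -(c j) ∧
            PowerSeries.coeff 3 (u' j) = 0) →
        ∀ j, 1 ≤ j → j ≤ p → u' j = u j) ∧
      (∀ j, 1 ≤ j → j ≤ p → ∀ n : ℕ,
        PowerSeries.coeff n (u j) ∈ Subfield.closure {c 1}) := by
  obtain ⟨u, hu, hnorm, hmem⟩ :=
    exists_escapeEquations_coeff_mem hp hcp hc (Subfield.subset_closure (Set.mem_singleton _))
  have hA : linOrbit c 0 1 p ≠ 0 := linOrbit_ne_zero hp hcp hc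
  have hodd : ∀ j, 1 ≤ j → j ≤ p → ∀ n, Odd n → coeff n (u j) = 0 :=
    fun j hj hjp _ => hu.coeff_odd_eq_zero hA hnorm hj hjp
  refine ⟨u, ⟨isEscapeSolution_one_iff.2 hu, fun j hj hjp => ?_⟩, fun u' hu' => ?_,
    fun j _ _ n => hmem j n⟩
  · obtain ⟨h0, h1, h2⟩ := X_pow_three_dvd_add_C_mul_X_sq_iff.1 (hnorm j hj hjp)
    exact ⟨hodd j hj hjp.le, h0, h1, h2, hodd j hj hjp.le 3 (by decide)⟩
  refine (isEscapeSolution_one_iff.1 hu'.1).eq_of_normalized hA hu (fun j hj hjp => ?_) hnorm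
  obtain ⟨-, h0, h1, h2, -⟩ := hu'.2 j hj hjp
  exact X_pow_three_dvd_add_C_mul_X_sq_iff.2 ⟨h0, h1, h2⟩
end

section
/- (Second grid rule R2.) For all integers k, ℓ ≥ 0 with d(a₀, a_k) ≤ 2^{−ℓ}, and for every integer i with 0 ≤ i ≤ ℓ: d(a₀, a_{k+i}) ≤ 2^{−(ℓ−i)} if and only if d(a₀, a_i) ≤ 2^{−(ℓ−i)}. (In marked-grid terms: if M(ℓ, k) = 1 then M(ℓ−i, k+i) = M(ℓ−i, i) for 0 ≤ i ≤ ℓ, where M(ℓ, k) = 1 means d(a₀, a_k) ≤ 2^{−ℓ}.) -/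
/-- **Second grid rule R2.** If `d(a₀, a_k) ≤ 2^{−ℓ}`, then for `0 ≤ i ≤ ℓ`:
`d(a₀, a_{k+i}) ≤ 2^{−(ℓ−i)}` if and only if `d(a₀, a_i) ≤ 2^{−(ℓ−i)}`
(where `a_j = F^{∘j}(a₀)`). -/
theorem grid_rule_R2 {K : Type*} (F : K → K) (a0 : K) (d : K → K → ℝ)
    (hsymm : ∀ x y, d x y = d y x)
    (hrefl : ∀ x, d x x = 0)
    (hvals : ∀ x y, d x y = 0 ∨ ∃ l : ℕ, d x y = (2 : ℝ) ^ (-(l : ℤ)))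
    (hultra : ∀ x y z, d x z ≤ max (d x y) (d y z))
    (hultraeq : ∀ x y z, d x y ≠ d y z → d x z = max (d x y) (d y z))
    (hprodlt : ∀ x y z, d x y * d x z * d y z < 1)
    (hexp : ∀ x y, d (F x) (F y) ≤ 2 * d x y)
    (hcrit : ∀ x y, d (F x) (F y) < 2 * d x y → d x y < 1 →
      d x y = d a0 x ∧ d x y = d a0 y ∧ 0 < d x y)
    (k l : ℕ) (h : d a0 (F^[k] a0) ≤ (2 : ℝ) ^ (-(l : ℤ))) :
    ∀ i : ℕ, i ≤ l →
      (d a0 (F^[k + i] a0) ≤ (2 : ℝ) ^ ((i : ℤ) - (l : ℤ)) ↔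
        d a0 (F^[i] a0) ≤ (2 : ℝ) ^ ((i : ℤ) - (l : ℤ))) := by
  -- iterated expansion bound
  have hiter : ∀ (n : ℕ) (x y : K), d (F^[n] x) (F^[n] y) ≤ 2 ^ n * d x y := by
    intro n
    induction n with
    | zero => intro x y; simp
    | succ n ih =>
      intro x y
      have h1 : d (F^[n+1] x) (F^[n+1] y) ≤ 2 * d (F^[n] x) (F^[n] y) := by
        rw [Function.iterate_succ_apply', Function.iterate_succ_apply']
        exact hexp _ _
      calc d (F^[n+1] x) (F^[n+1] y) ≤ 2 * d (F^[n] x) (F^[n] y) := h1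
        _ ≤ 2 * (2 ^ n * d x y) := by linarith [ih x y]
        _ = 2 ^ (n+1) * d x y := by ring
  intro i hi
  -- key bound: d(a_i, a_{k+i}) ≤ 2^{i-l}
  have hkey : d (F^[i] a0) (F^[k + i] a0) ≤ (2 : ℝ) ^ ((i : ℤ) - (l : ℤ)) := by
    have h1 : F^[k + i] a0 = F^[i] (F^[k] a0) := by
      rw [Nat.add_comm, Function.iterate_add_apply]
    rw [h1]
    calc d (F^[i] a0) (F^[i] (F^[k] a0)) ≤ 2 ^ i * d a0 (F^[k] a0) := hiter i a0 _
      _ ≤ 2 ^ i * (2 : ℝ) ^ (-(l : ℤ)) := by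
          have : (0:ℝ) < 2 ^ i := by positivity
          nlinarith
      _ = (2 : ℝ) ^ ((i : ℤ) - (l : ℤ)) := by
          rw [← zpow_natCast (2:ℝ) i, ← zpow_add₀ (by norm_num : (2:ℝ) ≠ 0)]
          ring_nf
  constructor
  · intro hki
    calc d a0 (F^[i] a0) ≤ max (d a0 (F^[k+i] a0)) (d (F^[k+i] a0) (F^[i] a0)) :=
          hultra _ _ _
      _ ≤ (2 : ℝ) ^ ((i : ℤ) - (l : ℤ)) := by
          apply max_le hki
          rw [hsymm]; exact hkey
  · intro hii
    calc d a0 (F^[k+i] a0) ≤ max (d a0 (F^[i] a0)) (d (F^[i] a0) (F^[k+i] a0)) :=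
          hultra _ _ _
      _ ≤ (2 : ℝ) ^ ((i : ℤ) - (l : ℤ)) := max_le hii hkey
end

section
/- (Fourth grid rule R4.) Let k ≥ 1 and ℓ ≥ 1 be integers. Suppose that d(a₀, a_k) = 2^{−ℓ}, that d(a₀, a_{k+i}) > 2^{i−ℓ} for all i with 0 < i < ℓ, and that d(a₀, a_ℓ) = 1. Then d(a₀, a_{ℓ+k}) < 1. -/
/-- **Fourth grid rule R4.** If `d(a₀, a_k) = 2^{−ℓ}`, `d(a₀, a_{k+i}) > 2^{i−ℓ}` for
`0 < i < ℓ`, and `d(a₀, a_ℓ) = 1`, then `d(a₀, a_{ℓ+k}) < 1`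
(where `a_j = F^{∘j}(a₀)`). -/
theorem grid_rule_R4 {K : Type*} (F : K → K) (a0 : K) (d : K → K → ℝ)
    (hsymm : ∀ x y, d x y = d y x)
    (hrefl : ∀ x, d x x = 0)
    (hvals : ∀ x y, d x y = 0 ∨ ∃ l : ℕ, d x y = (2 : ℝ) ^ (-(l : ℤ)))
    (hultra : ∀ x y z, d x z ≤ max (d x y) (d y z))
    (hultraeq : ∀ x y z, d x y ≠ d y z → d x z = max (d x y) (d y z))
    (hprodlt : ∀ x y z, d x y * d x z * d y z < 1)
    (hexp : ∀ x y, d (F x) (F y) ≤ 2 * d x y)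
    (hcrit : ∀ x y, d (F x) (F y) < 2 * d x y → d x y < 1 →
      d x y = d a0 x ∧ d x y = d a0 y ∧ 0 < d x y)
    (k l : ℕ) (hk : 1 ≤ k) (hl : 1 ≤ l)
    (h1 : d a0 (F^[k] a0) = (2 : ℝ) ^ (-(l : ℤ)))
    (h2 : ∀ i : ℕ, 0 < i → i < l → (2 : ℝ) ^ ((i : ℤ) - (l : ℤ)) < d a0 (F^[k + i] a0))
    (h3 : d a0 (F^[l] a0) = 1) :
    d a0 (F^[l + k] a0) < 1 := by
  have key : ∀ i ≤ l, d (F^[i] a0) (F^[k+i] a0) = (2:ℝ) ^ ((i:ℤ) - l) := by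
    intro i
    induction i with
    | zero =>
      intro _
      simpa only [Function.iterate_zero_apply, Nat.add_zero, Nat.cast_zero, zero_sub]
        using h1
    | succ i ih =>
      intro hil
      have hi : i < l := Nat.lt_of_succ_le hil
      have hP := ih (le_of_lt hi)
      have hlt1 : d (F^[i] a0) (F^[k+i] a0) < 1 := by
        rw [hP]
        have hneg : (i:ℤ) - l < 0 := by
          have : (i:ℤ) < l := by exact_mod_cast hi
          omega
        exact zpow_lt_one_of_neg₀ (by norm_num) hneg
      have hle : d (F^[i+1] a0) (F^[k+(i+1)] a0) ≤ 2 * d (F^[i] a0) (F^[k+i] a0) := by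
        have h := hexp (F^[i] a0) (F^[k+i] a0)
        rw [← Function.iterate_succ_apply' F i, ← Function.iterate_succ_apply' F (k+i)] at h
        exact h
      have h2pow : 2 * (2:ℝ) ^ ((i:ℤ) - l) = (2:ℝ) ^ (((i:ℕ)+1:ℕ) - (l:ℤ)) := by
        push_cast
        rw [show ((i:ℤ)+1) - l = ((i:ℤ) - l) + 1 by ring,
          zpow_add_one₀ (by norm_num : (2:ℝ) ≠ 0)]
        ring
      rcases eq_or_lt_of_le hle with heq | hstrict
      · rw [heq, hP, h2pow]
      · exfalso
        rw [Function.iterate_succ_apply' F i, show k+(i+1)=(k+i)+1 from rfl,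
          Function.iterate_succ_apply' F (k+i)] at hstrict
        obtain ⟨e1, e2, e3⟩ := hcrit (F^[i] a0) (F^[k+i] a0) hstrict hlt1
        rcases Nat.eq_zero_or_pos i with hi0 | hipos
        · subst hi0
          have e1' : d (F^[0] a0) (F^[k+0] a0) = 0 := by
            simpa only [Function.iterate_zero_apply, hrefl] using e1
          rw [e1'] at e3
          exact lt_irrefl 0 e3
        · have hh := h2 i hipos hi
          rw [← e2, hP] at hh
          exact lt_irrefl _ hh
  have hkl : d (F^[l] a0) (F^[k+l] a0) = 1 := by
    have h := key l le_rfl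
    rw [sub_self, zpow_zero] at h
    exact h
  have hfin := hprodlt a0 (F^[l] a0) (F^[k+l] a0)
  rw [h3, hkl, one_mul, mul_one, Nat.add_comm k l] at hfin
  exact hfin
end

section
/- (Kneading sequences separate orbit points.) Let z₀ ∈ K with orbit z_i = F^{∘i}(z₀). If n ≥ 0 and j, k ≥ 0 are integers such that σ(z_{j+n}) ≠ σ(z_{k+n}), then d(z_j, z_k) ≥ 2^{−n} > 0. -/
/-- **Kneading sequences separate orbit points.** Define the address `σ(z) = 0` if
`d(z, a₀) < 1` and `σ(z) = 1` otherwise (i.e. if `d(z, a₀) = 1`). For `z₀ ∈ K` with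
orbit `z_i = F^{∘i}(z₀)`: if `σ(z_{j+n}) ≠ σ(z_{k+n})` for some `n ≥ 0`, then
`d(z_j, z_k) ≥ 2^{−n} > 0`. -/
theorem kneading_separates_orbits {K : Type*} (F : K → K) (a0 : K) (d : K → K → ℝ)
    (hsymm : ∀ x y, d x y = d y x)
    (hrefl : ∀ x, d x x = 0)
    (hvals : ∀ x y, d x y = 0 ∨ ∃ l : ℕ, d x y = (2 : ℝ) ^ (-(l : ℤ)))
    (hultra : ∀ x y z, d x z ≤ max (d x y) (d y z))
    (hultraeq : ∀ x y z, d x y ≠ d y z → d x z = max (d x y) (d y z))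
    (hprodlt : ∀ x y z, d x y * d x z * d y z < 1)
    (hexp : ∀ x y, d (F x) (F y) ≤ 2 * d x y)
    (hcrit : ∀ x y, d (F x) (F y) < 2 * d x y → d x y < 1 →
      d x y = d a0 x ∧ d x y = d a0 y ∧ 0 < d x y)
    (σ : K → ℕ) (hσ : ∀ z : K, σ z = if d z a0 < 1 then 0 else 1)
    (z0 : K) :
    ∀ n j k : ℕ, σ (F^[j + n] z0) ≠ σ (F^[k + n] z0) →
      (2 : ℝ) ^ (-(n : ℤ)) ≤ d (F^[j] z0) (F^[k] z0) ∧
      0 < d (F^[j] z0) (F^[k] z0) := by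
  -- distances are ≤ 1
  have hle1 : ∀ x y, d x y ≤ 1 := by
    intro x y
    rcases hvals x y with h | ⟨l, h⟩
    · rw [h]; norm_num
    · rw [h]
      have : ((2:ℝ) ^ (l:ℕ))⁻¹ ≤ 1 := by
        rw [inv_le_one_iff₀]; right; exact one_le_pow₀ (by norm_num)
      simpa [zpow_neg, zpow_natCast] using this
  intro n
  induction n with
  | zero =>
    intro j k hne
    simp only [Nat.add_zero] at hne
    rw [hσ, hσ] at hne
    set x := F^[j] z0
    set y := F^[k] z0
    suffices h1 : d x y = 1 by rw [h1]; norm_num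
    by_cases hx : d x a0 < 1
    · have hy : ¬ d y a0 < 1 := fun hy => hne (by rw [if_pos hx, if_pos hy])
      have hy1 : d y a0 = 1 := le_antisymm (hle1 y a0) (not_lt.mp hy)
      have hne' : d x a0 ≠ d a0 y := by rw [hsymm a0 y, hy1]; exact ne_of_lt hx
      rw [hultraeq x a0 y hne', hsymm a0 y, hy1]
      exact max_eq_right (hle1 x a0)
    · have hx1 : d x a0 = 1 := le_antisymm (hle1 x a0) (not_lt.mp hx)
      have hy : d y a0 < 1 := by
        by_contra hy; exact hne (by rw [if_neg hx, if_neg hy])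
      have hlt : d a0 y < d x a0 := by rw [hsymm a0 y, hx1]; exact hy
      rw [hultraeq x a0 y (ne_of_gt hlt), hx1]
      exact max_eq_left (by rw [hsymm]; exact hle1 y a0)
  | succ n ih =>
    intro j k hne
    have hj : j + (n + 1) = (j + 1) + n := by ring
    have hk : k + (n + 1) = (k + 1) + n := by ring
    rw [hj, hk] at hne
    obtain ⟨hge, _⟩ := ih (j + 1) (k + 1) hne
    rw [Function.iterate_succ_apply' F j z0, Function.iterate_succ_apply' F k z0] at hge
    have h2 := hexp (F^[j] z0) (F^[k] z0)
    have key : (2:ℝ) ^ (-((n+1:ℕ) : ℤ)) ≤ d (F^[j] z0) (F^[k] z0) := by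
      have : (2:ℝ) ^ (-((n:ℕ) : ℤ)) ≤ 2 * d (F^[j] z0) (F^[k] z0) := le_trans hge h2
      have h3 : (2:ℝ) ^ (-((n+1:ℕ) : ℤ)) * 2 = (2:ℝ) ^ (-((n:ℕ) : ℤ)) := by
        rw [show (-((n+1:ℕ):ℤ)) = -(n:ℕ) + (-1) by push_cast; ring,
          zpow_add₀ (by norm_num : (2:ℝ) ≠ 0)]
        norm_num; ring
      nlinarith [h3]
    refine ⟨key, lt_of_lt_of_le ?_ key⟩
    positivity
end
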